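/- Let R = ℤ[x₀,x₁,x₂,x₃] and let I be the ideal generated by s₀ = x₀², s₁ = 2x₀x₁, s₂ = x₁² + 2x₀x₂, s₃ = 2x₀x₃ + 2x₁x₂. Then for every m ≥ 2, the class of the monomial x₀·x₂^m in R/I is a torsion element of additive order exactly 4; that is, 4·x₀x₂^m ∈ I, but z·x₀x₂^m ∈ I for z ∈ ℤ implies 4 ∣ z. -/
import Mathlib

open MvPolynomial

noncomputable def GORIdeal : Ideal (MvPolynomial (Fin 4) ℤ) :=
  Ideal.span {X 0 ^ 2, 2 * X 0 * X 1, X 1 ^ 2 + 2 * X 0 * X 2, 2 * X 0 * X 3 + 2 * X 1 * X 2}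

namespace GORaux

abbrev T := MvPolynomial (Fin 2) ℤ

noncomputable def e10 : Fin 2 →₀ ℕ := Finsupp.single 0 1
noncomputable def e02 : Fin 2 →₀ ℕ := Finsupp.single 1 2
noncomputable def e01 : Fin 2 →₀ ℕ := Finsupp.single 1 1

noncomputable def L (p : T) : ZMod 4 :=
  ((coeff e10 p + 2 * coeff e02 p : ℤ) : ZMod 4)

lemma L_add (p q : T) : L (p + q) = L p + L q := by
  simp [L, coeff_add]; ring

lemma L_zero : L 0 = 0 := by simp [L]

lemma supp10 : e10.support = {0} := by
  simp [e10, Finsupp.support_single_ne_zero]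

lemma supp02 : e02.support = {1} := by
  simp [e02, Finsupp.support_single_ne_zero]

lemma supp01 : e01.support = {1} := by
  simp [e01, Finsupp.support_single_ne_zero]

lemma sub10 : e10 - Finsupp.single 0 1 = 0 := by
  ext i; fin_cases i <;> simp [e10]

lemma sub02 : e02 - Finsupp.single 1 1 = e01 := by
  ext i; fin_cases i <;> simp [e02, e01]

lemma sub01 : e01 - Finsupp.single 1 1 = 0 := by
  ext i; fin_cases i <;> simp [e01]

lemma coeff10_mul_X1 (p : T) : coeff e10 (p * X 1) = 0 := by
  rw [coeff_mul_X']; simp [supp10]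

lemma coeff02_mul_X0 (p : T) : coeff e02 (p * X 0) = 0 := by
  rw [coeff_mul_X']; simp [supp02]

lemma coeff01_mul_X0 (p : T) : coeff e01 (p * X 0) = 0 := by
  rw [coeff_mul_X']; simp [supp01]

lemma coeff10_mul_X0 (p : T) : coeff e10 (p * X 0) = coeff 0 p := by
  rw [coeff_mul_X']; simp [supp10, sub10]

lemma coeff02_mul_X1 (p : T) : coeff e02 (p * X 1) = coeff e01 p := by
  rw [coeff_mul_X']; simp [supp02, sub02]

lemma coeff01_mul_X1 (p : T) : coeff e01 (p * X 1) = coeff 0 p := by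
  rw [coeff_mul_X']; simp [supp01, sub01]

lemma coeff0_mul_X0 (p : T) : coeff 0 (p * X 0) = 0 := by
  rw [coeff_mul_X']; simp

lemma coeff0_mul_X1 (p : T) : coeff 0 (p * X 1) = 0 := by
  rw [coeff_mul_X']; simp

lemma two_eq (p : T) : 2 * p = C 2 * p := by
  norm_num

lemma g0 (r : T) : L (r * X 0 ^ 2) = 0 := by
  have h : r * X 0 ^ 2 = (r * X 0) * X 0 := by ring
  rw [h]
  simp [L, coeff10_mul_X0, coeff02_mul_X0, coeff0_mul_X0]

lemma g1 (r : T) : L (r * (2 * X 0 * X 1)) = 0 := by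
  have h : r * (2 * X 0 * X 1) = ((C 2 * r) * X 0) * X 1 := by
    rw [← two_eq]; ring
  rw [h]
  simp [L, coeff10_mul_X1, coeff02_mul_X1, coeff01_mul_X0]

lemma g2 (r : T) : L (r * (X 1 ^ 2 + 2 * X 0)) = 0 := by
  have h : r * (X 1 ^ 2 + 2 * X 0) = ((r * X 1) * X 1) + ((C 2 * r) * X 0) := by
    rw [← two_eq]; ring
  rw [h, L_add]
  simp only [L, coeff10_mul_X1, coeff10_mul_X0, coeff02_mul_X1, coeff01_mul_X1,
    coeff02_mul_X0, coeff_C_mul]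
  push_cast
  ring_nf
  rw [show ((4 : ZMod 4)) = 0 by decide]
  ring

lemma g3 (r : T) : L (r * (2 * X 1)) = 0 := by
  have h : r * (2 * X 1) = (C 2 * r) * X 1 := by rw [← two_eq]; ring
  rw [h]
  simp only [L, coeff10_mul_X1, coeff02_mul_X1, coeff_C_mul]
  push_cast
  ring_nf
  rw [show ((4 : ZMod 4)) = 0 by decide]
  ring

noncomputable def φ : MvPolynomial (Fin 4) ℤ →ₐ[ℤ] T :=
  aeval ![X 0, X 1, 1, 0]

lemma key {p : MvPolynomial (Fin 4) ℤ} (hp : p ∈ GORIdeal) :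
    ∀ r : T, L (r * φ p) = 0 := by
  refine Submodule.span_induction
    (p := fun q _ => ∀ r : T, L (r * φ q) = 0) ?_ ?_ ?_ ?_ hp
  · intro q hq r
    rcases hq with h | h | h | h <;> subst h <;>
      simp only [map_mul, map_add, map_pow, map_ofNat, φ, aeval_X] <;>
      simp only [Matrix.cons_val_zero, Matrix.cons_val_one, Matrix.head_cons,
        Matrix.cons_val_two, Matrix.tail_cons, Matrix.cons_val_three,
        mul_one, mul_zero, add_zero, zero_add]
    · exact g0 r
    · exact g1 r
    · exact g2 r
    · exact g3 r
  · intro r; simp [L_zero]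
  · intro a b _ _ ha hb r
    rw [map_add, mul_add, L_add, ha, hb, add_zero]
  · intro a q _ hq r
    rw [smul_eq_mul, map_mul, ← mul_assoc]
    exact hq (r * φ a)

end GORaux

open GORaux in
theorem stmt0 (m : ℕ) (hm : 2 ≤ m) :
    (4 : MvPolynomial (Fin 4) ℤ) * (X 0 * X 2 ^ m) ∈ GORIdeal ∧
    ∀ z : ℤ, (C z : MvPolynomial (Fin 4) ℤ) * (X 0 * X 2 ^ m) ∈ GORIdeal → (4 : ℤ) ∣ z := by
  obtain ⟨k, rfl⟩ : ∃ k, m = k + 2 := ⟨m - 2, by omega⟩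
  constructor
  · have h : (4 : MvPolynomial (Fin 4) ℤ) * (X 0 * X 2 ^ (k + 2)) =
        (2 * X 2 ^ (k + 1)) * (X 1 ^ 2 + 2 * X 0 * X 2)
        + (X 3 * X 2 ^ k) * (2 * X 0 * X 1)
        - (X 1 * X 2 ^ k) * (2 * X 0 * X 3 + 2 * X 1 * X 2) := by ring
    rw [h]
    refine Ideal.sub_mem _ (Ideal.add_mem _ ?_ ?_) ?_ <;>
      refine Ideal.mul_mem_left _ _ (Ideal.subset_span ?_) <;> simp
  · intro z hz
    have h := key hz 1
    rw [one_mul] at h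
    have hφ : φ (C z * (X 0 * X 2 ^ (k + 2))) = C z * X 0 := by
      simp only [map_mul, map_pow, φ, aeval_X, aeval_C]
      simp [algebraMap_eq]
    rw [hφ] at h
    have hc10 : coeff e10 (C z * X 0 : T) = z := by
      rw [coeff_C_mul, coeff_X']
      simp [e10]
    have hc02 : coeff e02 (C z * X 0 : T) = 0 := by
      rw [coeff_C_mul, coeff_X']
      have : ¬ (Finsupp.single (0 : Fin 2) 1 = e02) := by
        intro hh
        have := DFunLike.congr_fun hh 1
        simp [e02] at this
      simp [this]
    rw [L, hc10, hc02] at h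
    have h4 : ((z : ZMod 4)) = 0 := by push_cast at h; simpa using h
    exact_mod_cast (ZMod.intCast_zmod_eq_zero_iff_dvd z 4).mp h4
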